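/- arXiv:0812.1250 — 6 statements merged into one kernel-verified Lean document; each statement's English description precedes it below -/
import Mathlib

section
/- Let ℓ be a positive natural number and let 2^v be the largest power of 2 dividing ℓ. Then the binomial coefficient binom(ℓ + 2^v - 1, 2^v) is odd. -/
/-!
By Lucas' theorem, `n.choose (p ^ k)` is congruent modulo `p` to the `k`-th base-`p` digit of `n`.
Writing `ℓ = 2 ^ v * m` with `m` odd, `ℓ + 2 ^ v - 1 = 2 ^ v * m + (2 ^ v - 1)` has `v`-th binary
digit `m % 2 = 1`.
-/

theorem Nat.choose_prime_pow_modEq_div {p : ℕ} [Fact p.Prime] (n k : ℕ) :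
    n.choose (p ^ k) ≡ n / p ^ k [MOD p] := by
  induction k generalizing n with
  | zero => simpa using Nat.ModEq.refl n
  | succ k ih =>
    have hp : 0 < p := (Fact.out : p.Prime).pos
    calc n.choose (p ^ (k + 1))
        ≡ (n % p).choose (p ^ (k + 1) % p) * (n / p).choose (p ^ (k + 1) / p) [MOD p] :=
          Choose.choose_modEq_choose_mod_mul_choose_div_nat
      _ = (n / p).choose (p ^ k) := by
          rw [pow_succ, Nat.mul_mod_left, Nat.mul_div_cancel _ hp, Nat.choose_zero_right, one_mul]
      _ ≡ n / p / p ^ k [MOD p] := ih _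
      _ = n / p ^ (k + 1) := by rw [Nat.div_div_eq_div_mul, pow_succ']

theorem Nat.odd_div_two_pow_padicValNat {n : ℕ} (hn : n ≠ 0) : Odd (n / 2 ^ padicValNat 2 n) := by
  rw [← Nat.factorization_def n Nat.prime_two, Nat.odd_iff, ← Nat.two_dvd_ne_zero]
  exact Nat.not_dvd_ordCompl Nat.prime_two hn

/-- If `ℓ > 0` and `2^v` is the `2`-part of `ℓ` (so `v` is the `2`-adic valuation of `ℓ`),
then `C(ℓ + 2^v - 1, 2^v)` is odd. -/
theorem choose_add_two_part_sub_one_odd (ℓ : ℕ) (hℓ : 0 < ℓ) :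
    Odd ((ℓ + 2 ^ (padicValNat 2 ℓ) - 1).choose (2 ^ (padicValNat 2 ℓ))) := by
  set q := 2 ^ padicValNat 2 ℓ
  have hq0 : 0 < q := by positivity
  have hdiv : (ℓ + q - 1) / q = ℓ / q := by
    obtain ⟨m, hm⟩ : q ∣ ℓ := pow_padicValNat_dvd
    rw [hm, Nat.mul_div_cancel_left _ hq0, Nat.add_sub_assoc hq0, Nat.mul_add_div hq0,
      Nat.div_eq_of_lt (by omega), add_zero]
  have hlucas : (ℓ + q - 1).choose q ≡ ℓ / q [MOD 2] := by
    rw [← hdiv]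
    exact Nat.choose_prime_pow_modEq_div _ _
  rw [Nat.odd_iff, hlucas, ← Nat.odd_iff]
  exact Nat.odd_div_two_pow_padicValNat hℓ.ne'
end

section
/- Let n be an even positive natural number that is not a power of 2, let n₂ be its 2-part, and set t = (n + n₂)/2. Then the binomial coefficient binom(t - 2, 2t - n - 1) = binom((n - n₂)/2 + n₂ - 2, n₂ - 1) is even, while binom(t - 2, 2t - n - 2) = binom((n - n₂)/2 + n₂ - 2, n₂ - 2) is odd. -/
/-!
Write `n = n₂ (2k + 1)`. Then `t = n₂ (k + 1)`, so `2t - n = n₂` and `t - 2 = n₂ k + (n₂ - 2)`.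
Since `n₂` is a power of `2` and `n₂ - 2, n₂ - 1 < n₂`, Lucas' theorem modulo `2` gives
`C(n₂ k + (n₂ - 2), j) ≡ C(n₂ - 2, j)` for `j < n₂`; this is `0` for `j = n₂ - 1` and `1` for
`j = n₂ - 2`.
-/

theorem Choose.choose_pow_mul_add_modEq {p : ℕ} [Fact p.Prime] (q q' : ℕ) {s r r' : ℕ}
    (hr : r < p ^ s) (hr' : r' < p ^ s) :
    (p ^ s * q + r).choose (p ^ s * q' + r') ≡ q.choose q' * r.choose r' [MOD p] := by
  induction s generalizing r r' with
  | zero => simp_all [Nat.ModEq.refl]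
  | succ s ih =>
    have hp : 0 < p := (Fact.out : p.Prime).pos
    have hmod (a b : ℕ) : (p ^ (s + 1) * a + b) % p = b % p := by
      rw [pow_succ, mul_comm _ p, mul_assoc, Nat.mul_add_mod]
    have hdiv (a b : ℕ) : (p ^ (s + 1) * a + b) / p = p ^ s * a + b / p := by
      rw [pow_succ, mul_comm _ p, mul_assoc, Nat.mul_add_div hp]
    have hlt {b : ℕ} (hb : b < p ^ (s + 1)) : b / p < p ^ s :=
      Nat.div_lt_of_lt_mul (by rwa [mul_comm, ← pow_succ])
    calc (p ^ (s + 1) * q + r).choose (p ^ (s + 1) * q' + r')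
        ≡ (r % p).choose (r' % p) * (p ^ s * q + r / p).choose (p ^ s * q' + r' / p) [MOD p] := by
          simpa only [hmod, hdiv] using Choose.choose_modEq_choose_mod_mul_choose_div_nat
            (n := p ^ (s + 1) * q + r) (k := p ^ (s + 1) * q' + r') (p := p)
      _ ≡ (r % p).choose (r' % p) * (q.choose q' * (r / p).choose (r' / p)) [MOD p] :=
          (ih (hlt hr) (hlt hr')).mul_left _
      _ = q.choose q' * ((r % p).choose (r' % p) * (r / p).choose (r' / p)) := by ring
      _ ≡ q.choose q' * r.choose r' [MOD p] :=
          (Choose.choose_modEq_choose_mod_mul_choose_div_nat.mul_left _).symm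

theorem exists_odd_eq_two_pow_padicValNat_mul {n : ℕ} (hn : n ≠ 0) :
    ∃ m, Odd m ∧ n = 2 ^ padicValNat 2 n * m := by
  obtain ⟨m, hm⟩ := pow_padicValNat_dvd (p := 2) (n := n)
  refine ⟨m, Nat.odd_iff.mpr ?_, hm⟩
  by_contra h
  obtain ⟨j, rfl⟩ : 2 ∣ m := Nat.dvd_of_mod_eq_zero (by omega)
  have hdvd : 2 ^ (padicValNat 2 n + 1) ∣ 2 ^ padicValNat 2 n * (2 * j) := ⟨j, by ring⟩
  rw [← hm] at hdvd
  exact pow_succ_padicValNat_not_dvd hn hdvd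

theorem choose_two_part_parity_general (n : ℕ) (hn : 0 < n) (heven : Even n)
    (n₂ t : ℕ) (hn₂ : n₂ = 2 ^ (padicValNat 2 n)) (ht : t = (n + n₂) / 2) :
    (t - 2).choose (2 * t - n - 1) = ((n - n₂) / 2 + n₂ - 2).choose (n₂ - 1) ∧
    Even ((t - 2).choose (2 * t - n - 1)) ∧
    (t - 2).choose (2 * t - n - 2) = ((n - n₂) / 2 + n₂ - 2).choose (n₂ - 2) ∧
    Odd ((t - 2).choose (2 * t - n - 2)) := by
  obtain ⟨_, ⟨k, rfl⟩, hsplit⟩ := exists_odd_eq_two_pow_padicValNat_mul hn.ne'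
  have hn_eq : n = 2 * (n₂ * k) + n₂ := by rw [hsplit, hn₂]; ring
  have hn₂_ne_one : n₂ ≠ 1 := by
    rintro rfl
    rw [Nat.even_iff] at heven
    omega
  have hn₂_pos : 0 < n₂ := hn₂ ▸ Nat.two_pow_pos _
  have ht_sub : t - 2 = n₂ * k + (n₂ - 2) := by omega
  have hlucas {r : ℕ} (hr : r < n₂) : (t - 2).choose r ≡ (n₂ - 2).choose r [MOD 2] := by
    have := Choose.choose_pow_mul_add_modEq (p := 2) k 0 (hn₂ ▸ (by omega : n₂ - 2 < n₂))
      (hn₂ ▸ hr)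
    simpa [ht_sub, ← hn₂] using this
  have h2t : 2 * t - n = n₂ := by omega
  refine ⟨by congr 1 <;> omega, ?_, by congr 1 <;> omega, ?_⟩
  · rw [Nat.even_iff, h2t, hlucas (by omega), Nat.choose_eq_zero_of_lt (by omega)]
  · rw [Nat.odd_iff, show 2 * t - n - 2 = n₂ - 2 by omega, hlucas (by omega), Nat.choose_self]

/-- Let `n` be even, positive and not a power of `2`, let `n₂ = 2^(v₂ n)` be its `2`-part,
and `t = (n + n₂)/2`.  Then `C(t-2, 2t-n-1) = C((n-n₂)/2 + n₂ - 2, n₂ - 1)` is even, while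
`C(t-2, 2t-n-2) = C((n-n₂)/2 + n₂ - 2, n₂ - 2)` is odd. -/
theorem choose_two_part_parity (n : ℕ) (hn : 0 < n) (heven : Even n)
    (hnp : ¬ ∃ m : ℕ, n = 2 ^ m)
    (n₂ t : ℕ) (hn₂ : n₂ = 2 ^ (padicValNat 2 n)) (ht : t = (n + n₂) / 2) :
    (t - 2).choose (2 * t - n - 1) = ((n - n₂) / 2 + n₂ - 2).choose (n₂ - 1) ∧
    Even ((t - 2).choose (2 * t - n - 1)) ∧
    (t - 2).choose (2 * t - n - 2) = ((n - n₂) / 2 + n₂ - 2).choose (n₂ - 2) ∧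
    Odd ((t - 2).choose (2 * t - n - 2)) :=
  choose_two_part_parity_general n hn heven n₂ t hn₂ ht
end

section
/- Let L be a Lie algebra generated by two elements. Then the bracket [L², L²] of the derived subalgebra with itself is contained in L⁵, the fifth term of the lower central series of L. -/
open LieModule LieSubmodule

/-- General fact: `⁅L^(m+1), L^(n+1)⁆ ⊆ L^(m+n+2)` in mathlib indexing. -/
private lemma lcs_bracket_mem {K L : Type*} [Field K] [LieRing L] [LieAlgebra K L] :
    ∀ (n m : ℕ) (a b : L), a ∈ lowerCentralSeries K L L m →
      b ∈ lowerCentralSeries K L L n → ⁅a, b⁆ ∈ lowerCentralSeries K L L (m + n + 1) := by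
  intro n
  induction n with
  | zero =>
    intro m a b ha _
    rw [LieModule.lowerCentralSeries_succ]
    have : ⁅b, a⁆ ∈ ⁅(⊤ : LieIdeal K L), lowerCentralSeries K L L m⁆ :=
      lie_mem_lie (LieSubmodule.mem_top _) ha
    simpa using neg_mem this
  | succ n ih =>
    intro m a b ha hb
    rw [LieModule.lowerCentralSeries_succ] at hb
    have hb' : b ∈ (Submodule.span K
        { m' : L | ∃ z ∈ (⊤ : LieIdeal K L), ∃ w ∈ lowerCentralSeries K L L n, ⁅z, w⁆ = m' }) := by
      rwa [← LieSubmodule.mem_toSubmodule, LieSubmodule.lieIdeal_oper_eq_linear_span'] at hb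
    clear hb
    induction hb' using Submodule.span_induction with
    | mem b hbmem =>
      obtain ⟨z, -, w, hw, rfl⟩ := hbmem
      have key : ⁅a, ⁅z, w⁆⁆ = ⁅⁅a, z⁆, w⁆ + ⁅z, ⁅a, w⁆⁆ := by
        rw [leibniz_lie]
      rw [key]
      have h1 : ⁅a, z⁆ ∈ lowerCentralSeries K L L (m + 1) := by
        rw [LieModule.lowerCentralSeries_succ]
        have : ⁅z, a⁆ ∈ ⁅(⊤ : LieIdeal K L), lowerCentralSeries K L L m⁆ :=
          lie_mem_lie (LieSubmodule.mem_top _) ha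
        simpa using neg_mem this
      have h2 : ⁅⁅a, z⁆, w⁆ ∈ lowerCentralSeries K L L (m + 1 + n + 1) :=
        ih (m + 1) _ _ h1 hw
      have h3 : ⁅a, w⁆ ∈ lowerCentralSeries K L L (m + n + 1) := ih m _ _ ha hw
      have h4 : ⁅z, ⁅a, w⁆⁆ ∈ lowerCentralSeries K L L (m + n + 2) := by
        rw [show m + n + 2 = (m + n + 1) + 1 from rfl, LieModule.lowerCentralSeries_succ]
        exact lie_mem_lie (LieSubmodule.mem_top _) h3
      have : m + 1 + n + 1 = m + (n + 1) + 1 := by ring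
      rw [this] at h2
      have : m + n + 2 = m + (n + 1) + 1 := by ring
      rw [this] at h4
      exact add_mem h2 h4
    | zero => simp
    | add u v _ _ hu hv => rw [lie_add]; exact add_mem hu hv
    | smul t u _ hu => rw [lie_smul]; exact Submodule.smul_mem _ t hu

/-- In a Lie algebra generated by two elements, the bracket `[L², L²]` of the derived
subalgebra with itself is contained in `L⁵`, the fifth term of the lower central series
(here `LieModule.lowerCentralSeries K L L n` is the paper's `L^(n+1)`). -/
theorem derived_bracket_le_fifth {K L : Type*} [Field K] [LieRing L] [LieAlgebra K L]
    (x y : L) (hgen : LieSubalgebra.lieSpan K L {x, y} = ⊤) :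
    ⁅LieModule.lowerCentralSeries K L L 1, LieModule.lowerCentralSeries K L L 1⁆ ≤
      LieModule.lowerCentralSeries K L L 4 := by
  -- S = span{[x,y]} + L^3 as a submodule
  set S : Submodule K L :=
    Submodule.span K {⁅x, y⁆} ⊔ (lowerCentralSeries K L L 2 : LieSubmodule K L L) with hS
  have hxyS : ⁅x, y⁆ ∈ S := Submodule.mem_sup_left (Submodule.mem_span_singleton_self _)
  have hlcs2S : ∀ z ∈ lowerCentralSeries K L L 2, z ∈ S := fun z hz => Submodule.mem_sup_right hz
  -- S is a Lie ideal: ⁅L, S⁆ ⊆ L^3 ⊆ S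
  have hideal : ∀ (z : L), ∀ s ∈ S, ⁅z, s⁆ ∈ S := by
    intro z s hs
    apply hlcs2S
    rw [show (2 : ℕ) = 1 + 1 from rfl, LieModule.lowerCentralSeries_succ]
    refine lie_mem_lie (LieSubmodule.mem_top _) ?_
    have hsub : S ≤ (lowerCentralSeries K L L 1 : LieSubmodule K L L) := by
      apply sup_le
      · rw [Submodule.span_singleton_le_iff_mem]
        rw [LieModule.lowerCentralSeries_succ]
        exact lie_mem_lie (LieSubmodule.mem_top _) (LieSubmodule.mem_top _)
      · exact (antitone_lowerCentralSeries K L L (by norm_num : (1:ℕ) ≤ 2))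
    exact hsub hs
  -- key claim: L^2 ⊆ S
  have hkey : ∀ a ∈ lowerCentralSeries K L L 1, a ∈ S := by
    -- first: for a ∈ {x, y}, the set U_a = {b | ⁅a,b⁆ ∈ S} is a Lie subalgebra containing x,y
    have hU : ∀ a : L, (∀ b : L, ⁅a, x⁆ ∈ S → ⁅a, y⁆ ∈ S → True) → True := fun _ _ => trivial
    have hgenbr : ∀ a b : L, a ∈ ({x, y} : Set L) → ⁅a, b⁆ ∈ S := by
      intro a b ha
      let U : LieSubalgebra K L :=
        { carrier := {b : L | ⁅a, b⁆ ∈ S}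
          add_mem' := fun hu hv => by simp only [Set.mem_setOf_eq, lie_add] at *; exact add_mem hu hv
          zero_mem' := by simp only [Set.mem_setOf_eq, lie_zero]; exact zero_mem S
          smul_mem' := fun t u hu => by
            simp only [Set.mem_setOf_eq, lie_smul] at *; exact Submodule.smul_mem _ t hu
          lie_mem' := fun {u v} hu hv => by
            simp only [Set.mem_setOf_eq] at *
            have : ⁅a, ⁅u, v⁆⁆ = ⁅⁅a, u⁆, v⁆ + ⁅u, ⁅a, v⁆⁆ := by rw [leibniz_lie]
            rw [this]
            refine add_mem ?_ (hideal _ _ hv)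
            have : ⁅⁅a, u⁆, v⁆ = -⁅v, ⁅a, u⁆⁆ := by rw [lie_skew]
            rw [this]; exact neg_mem (hideal _ _ hu) }
      have hxU : x ∈ U := by
        show ⁅a, x⁆ ∈ S
        rcases ha with rfl | rfl
        · simp only [lie_self]; exact zero_mem S
        · have : ⁅a, x⁆ = -⁅x, a⁆ := by rw [lie_skew]
          rw [this]; exact neg_mem hxyS
      have hyU : y ∈ U := by
        show ⁅a, y⁆ ∈ S
        rcases ha with rfl | rfl
        · exact hxyS
        · simp only [lie_self]; exact zero_mem S
      have : LieSubalgebra.lieSpan K L {x, y} ≤ U := by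
        apply LieSubalgebra.lieSpan_le.mpr
        rintro z (rfl | rfl)
        exacts [hxU, hyU]
      rw [hgen] at this
      exact this (LieSubalgebra.mem_top b)
    -- second: T = {a | ∀ b, ⁅a,b⁆ ∈ S} is a Lie subalgebra containing x, y
    let T : LieSubalgebra K L :=
      { carrier := {a : L | ∀ b : L, ⁅a, b⁆ ∈ S}
        add_mem' := fun hu hv b => by rw [add_lie]; exact add_mem (hu b) (hv b)
        zero_mem' := fun b => by rw [zero_lie]; exact zero_mem S
        smul_mem' := fun t u hu b => by rw [smul_lie]; exact Submodule.smul_mem _ t (hu b)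
        lie_mem' := fun {u v} hu hv b => by
          have : ⁅⁅u, v⁆, b⁆ = ⁅u, ⁅v, b⁆⁆ - ⁅v, ⁅u, b⁆⁆ := by rw [lie_lie]
          rw [this]
          exact sub_mem (hideal _ _ (hv b)) (hideal _ _ (hu b)) }
    have hT : LieSubalgebra.lieSpan K L {x, y} ≤ T := by
      apply LieSubalgebra.lieSpan_le.mpr
      rintro z (rfl | rfl) <;> intro b
      · exact hgenbr _ b (Or.inl rfl)
      · exact hgenbr _ b (Or.inr rfl)
    rw [hgen] at hT
    -- now L^2 = ⁅⊤, ⊤⁆ ⊆ S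
    intro a ha
    rw [LieModule.lowerCentralSeries_succ, LieModule.lowerCentralSeries_zero] at ha
    have ha' : a ∈ (Submodule.span K
        { m' : L | ∃ z ∈ (⊤ : LieIdeal K L), ∃ w ∈ (⊤ : LieSubmodule K L L), ⁅z, w⁆ = m' }) := by
      rwa [← LieSubmodule.mem_toSubmodule, LieSubmodule.lieIdeal_oper_eq_linear_span'] at ha
    clear ha
    induction ha' using Submodule.span_induction with
    | mem u humem =>
      obtain ⟨z, -, w, -, rfl⟩ := humem
      exact hT (LieSubalgebra.mem_top z) w
    | zero => exact zero_mem S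
    | add u v _ _ hu hv => exact add_mem hu hv
    | smul t u _ hu => exact Submodule.smul_mem _ t hu
  -- conclude
  rw [lie_le_iff]
  intro a ha b hb
  have hxy1 : ⁅x, y⁆ ∈ lowerCentralSeries K L L 1 := by
    rw [LieModule.lowerCentralSeries_succ]; exact lie_mem_lie (LieSubmodule.mem_top _) (LieSubmodule.mem_top _)
  obtain ⟨p, hp, q, hq, rfl⟩ := Submodule.mem_sup.mp (hkey a ha)
  obtain ⟨p', hp', q', hq', rfl⟩ := Submodule.mem_sup.mp (hkey b hb)
  obtain ⟨c, rfl⟩ := Submodule.mem_span_singleton.mp hp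
  obtain ⟨d, rfl⟩ := Submodule.mem_span_singleton.mp hp'
  have hq2 : q ∈ lowerCentralSeries K L L 2 := hq
  have hq'2 : q' ∈ lowerCentralSeries K L L 2 := hq'
  have e1 : ⁅q, d • ⁅x, y⁆ + q'⁆ ∈ lowerCentralSeries K L L 4 := by
    have hb2 : d • ⁅x, y⁆ + q' ∈ lowerCentralSeries K L L 1 :=
      add_mem (Submodule.smul_mem _ d hxy1) ((antitone_lowerCentralSeries K L L
        (by norm_num : (1:ℕ) ≤ 2)) hq'2)
    exact lcs_bracket_mem 1 2 _ _ hq2 hb2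
  have e2 : ⁅⁅x, y⁆, q'⁆ ∈ lowerCentralSeries K L L 4 := lcs_bracket_mem 2 1 _ _ hxy1 hq'2
  have expand : ⁅c • ⁅x, y⁆ + q, d • ⁅x, y⁆ + q'⁆
      = (c * d) • ⁅⁅x, y⁆, ⁅x, y⁆⁆ + c • ⁅⁅x, y⁆, q'⁆ + ⁅q, d • ⁅x, y⁆ + q'⁆ := by
    rw [add_lie, smul_lie, lie_add, lie_smul, smul_add, smul_smul]
  rw [expand, lie_self, smul_zero, zero_add]
  exact add_mem (Submodule.smul_mem _ c e2) e1
end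

section
/- Let M = ⊕_{i≥1} M_i be a graded Lie algebra of maximal class over a field, and let y ∈ M₁ be a nonzero element with [M₂, y] = 0. If (ad y)² = 0 on M, then for every i ≥ 2, y centralizes at least one of the two components M_i, M_{i+1}; that is, there do not exist consecutive indices i, i+1 ≥ 2 with [M_i, y] ≠ 0 and [M_{i+1}, y] ≠ 0. -/
/-- If `v` lies in the span of `s` and `a` in the span of `t`, then `⁅v, a⁆` lies
in the span of all brackets of elements of `s` with elements of `t`. -/
lemma bracket_mem_span_image2 {K L : Type*} [Field K] [LieRing L] [LieAlgebra K L]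
    (s t : Set L) :
    ∀ v ∈ Submodule.span K s, ∀ a ∈ Submodule.span K t,
      ⁅v, a⁆ ∈ Submodule.span K (Set.image2 (fun u w => ⁅u, w⁆) s t) := by
  intro v hv
  induction hv using Submodule.span_induction with
  | mem x hx =>
    intro a ha
    induction ha using Submodule.span_induction with
    | mem b hb => exact Submodule.subset_span (Set.mem_image2_of_mem hx hb)
    | zero => simp
    | add b c _ _ hb hc => rw [lie_add]; exact Submodule.add_mem _ hb hc
    | smul c b _ hb => rw [lie_smul]; exact Submodule.smul_mem _ _ hb
  | zero => intro a ha; simp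
  | add b c _ _ hb hc => intro a ha; rw [add_lie]; exact Submodule.add_mem _ (hb a ha) (hc a ha)
  | smul c b _ hb => intro a ha; rw [smul_lie]; exact Submodule.smul_mem _ _ (hb a ha)

/-- In a graded Lie algebra of maximal class `M = ⊕ M_i`, if `y ∈ M₁` is a nonzero
sandwich element (`(ad y)² = 0`) centralizing `M₂`, then for every `i ≥ 2` the element
`y` centralizes at least one of the components `M_i`, `M_{i+1}`. -/
theorem sandwich_centralizes_one_of_consecutive {K L : Type*} [Field K] [LieRing L]
    [LieAlgebra K L]
    (M : ℕ → Submodule K L)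
    (hdim1 : Module.finrank K (M 1) = 2)
    (hdim : ∀ i ≥ 2, Module.finrank K (M i) ≤ 1)
    (hgrade : ∀ i j, ∀ u ∈ M i, ∀ w ∈ M j, ⁅u, w⁆ ∈ M (i + j))
    (hstep : ∀ i ≥ 1, Submodule.span K {w | ∃ u ∈ M i, ∃ a ∈ M 1, w = ⁅u, a⁆} = M (i + 1))
    (y : L) (hy : y ∈ M 1) (hy0 : y ≠ 0)
    (hyC2 : ∀ u ∈ M 2, ⁅u, y⁆ = 0)
    (hsand : ∀ v : L, ⁅⁅v, y⁆, y⁆ = 0) :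
    ∀ i ≥ 2, (∀ u ∈ M i, ⁅u, y⁆ = 0) ∨ (∀ u ∈ M (i + 1), ⁅u, y⁆ = 0) := by
  -- Every component `M i` with `i ≥ 1` is finite-dimensional.
  have hfd : ∀ i, 1 ≤ i → FiniteDimensional K (M i) := by
    intro i hi
    induction i with
    | zero => omega
    | succ n ih =>
      rcases Nat.lt_or_ge n 1 with hn | hn
      · -- n = 0, so M 1 : finrank 2 > 0
        interval_cases n
        exact FiniteDimensional.of_finrank_pos (by rw [hdim1]; norm_num)
      · have hMn : FiniteDimensional K (M n) := ih hn
        have hM1 : FiniteDimensional K (M 1) :=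
          FiniteDimensional.of_finrank_pos (by rw [hdim1]; norm_num)
        obtain ⟨s, hsfin, hsspan⟩ := Submodule.fg_def.mp ((M n).fg_iff_finiteDimensional.mpr hMn)
        obtain ⟨t, htfin, htspan⟩ := Submodule.fg_def.mp ((M 1).fg_iff_finiteDimensional.mpr hM1)
        have hle : M (n + 1) ≤ Submodule.span K (Set.image2 (fun u w => ⁅u, w⁆) s t) := by
          rw [← hstep n hn, Submodule.span_le]
          rintro w ⟨u, hu, a, ha, rfl⟩
          exact bracket_mem_span_image2 s t u (hsspan ▸ hu) a (htspan ▸ ha)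
        have : FiniteDimensional K (Submodule.span K (Set.image2 (fun u w => ⁅u, w⁆) s t)) :=
          FiniteDimensional.span_of_finite K (Set.Finite.image2 _ hsfin htfin)
        exact Submodule.finiteDimensional_of_le hle
  intro i hi
  by_cases h : ∀ u ∈ M i, ⁅u, y⁆ = 0
  · exact Or.inl h
  · push_neg at h
    obtain ⟨u, hu, hne⟩ := h
    right
    have hv : ⁅u, y⁆ ∈ M (i + 1) := hgrade i 1 u hu y hy
    have : FiniteDimensional K (M (i + 1)) := hfd (i + 1) (by omega)
    have hspan : Submodule.span K {⁅u, y⁆} = M (i + 1) := by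
      refine Submodule.eq_of_le_of_finrank_le ?_ ?_
      · simpa [Submodule.span_le] using hv
      · rw [finrank_span_singleton hne]
        exact hdim (i + 1) (by omega)
    intro w hw
    rw [← hspan] at hw
    obtain ⟨c, rfl⟩ := Submodule.mem_span_singleton.mp hw
    rw [smul_lie, hsand, smul_zero]
end

section
/- Let L = ⊕_{i≥1} L_i be a thin Lie algebra over a field of characteristic 2 with dim L₃ = 1, and suppose L_k is the second diamond (dim L_i = 1 for 2 ≤ i < k, dim L_k = 2) with L^{k+1} ≠ 0. Then k is odd. -/
section Aux

private lemma char2_add_self (K : Type*) {L : Type*} [Field K] [CharP K 2] [LieRing L]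
    [LieAlgebra K L] (z : L) : z + z = 0 := by
  have h2 : (2 : K) = 0 := by exact_mod_cast CharP.cast_eq_zero K 2
  have h := two_smul K z
  rw [h2, zero_smul] at h
  exact h.symm

private lemma jacob2 {M : Type*} [LieRing M] (u w z : M) :
    ⁅⁅u, w⁆, z⁆ = ⁅⁅u, z⁆, w⁆ + ⁅u, ⁅w, z⁆⁆ := by
  rw [lie_lie, sub_eq_add_neg, lie_skew]
  abel

private lemma sand (K : Type*) {L : Type*} [Field K] [CharP K 2] [LieRing L] [LieAlgebra K L]
    (y u a : L) (hu : ⁅⁅u, y⁆, y⁆ = 0) (ha : ⁅⁅a, y⁆, y⁆ = 0) :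
    ⁅⁅⁅u, a⁆, y⁆, y⁆ = 0 := by
  have e1 : ⁅⁅u, a⁆, y⁆ = ⁅⁅u, y⁆, a⁆ + ⁅u, ⁅a, y⁆⁆ := jacob2 u a y
  have e2 : ⁅⁅⁅u, y⁆, a⁆, y⁆ = ⁅⁅u, y⁆, ⁅a, y⁆⁆ := by
    rw [jacob2 ⁅u, y⁆ a y, hu, zero_lie, zero_add]
  have e3 : ⁅⁅u, ⁅a, y⁆⁆, y⁆ = ⁅⁅u, y⁆, ⁅a, y⁆⁆ := by
    rw [jacob2 u ⁅a, y⁆ y, ha, lie_zero, add_zero]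
  rw [e1, add_lie, e2, e3]
  exact char2_add_self K _

end Aux

/-- In a thin Lie algebra over a field of characteristic two with `dim L₃ = 1`, the
degree `k` of the second diamond is odd (assuming `L^{k+1} ≠ 0`). -/
theorem second_diamond_degree_odd {K L : Type*} [Field K] [CharP K 2] [LieRing L]
    [LieAlgebra K L]
    (Lc : ℕ → Submodule K L)
    (hdim1 : Module.finrank K (Lc 1) = 2)
    (hgrade : ∀ i j, ∀ u ∈ Lc i, ∀ w ∈ Lc j, ⁅u, w⁆ ∈ Lc (i + j))
    (hcov : ∀ i ≥ 1, ∀ u ∈ Lc i, u ≠ 0 →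
      Submodule.span K {w | ∃ a ∈ Lc 1, w = ⁅u, a⁆} = Lc (i + 1))
    (hdim3 : Module.finrank K (Lc 3) = 1)
    (k : ℕ) (hk : 2 ≤ k)
    (hone : ∀ i, 2 ≤ i → i < k → Module.finrank K (Lc i) = 1)
    (hdiam : Module.finrank K (Lc k) = 2)
    (hnz : Lc (k + 1) ≠ ⊥) :
    Odd k := by
  rcases Nat.even_or_odd k with he | ho
  swap
  · exact ho
  exfalso
  obtain ⟨m, hm⟩ := he
  haveI fd1 : FiniteDimensional K (Lc 1) := FiniteDimensional.of_finrank_pos (by omega)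
  -- the linear map `a ↦ ⁅u, a⁆` on `Lc 1`
  let φ : L → (↥(Lc 1) →ₗ[K] L) := fun u =>
    { toFun := fun a => ⁅u, (a : L)⁆
      map_add' := fun a b => by simp
      map_smul' := fun c a => by simp }
  -- first: k = 2 is impossible
  have hk2 : k ≠ 2 := by
    intro h2
    subst h2
    have h1ne : Lc 1 ≠ ⊥ := by
      intro hb
      rw [hb] at hdim1
      rw [finrank_bot] at hdim1
      omega
    obtain ⟨u, hu, hune⟩ := (Submodule.ne_bot_iff _).1 h1ne
    have hsp := hcov 1 le_rfl u hu hune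
    have hset : {w | ∃ a ∈ Lc 1, w = ⁅u, a⁆} = Set.range (φ u) := by
      ext w
      constructor
      · rintro ⟨a, ha, rfl⟩; exact ⟨⟨a, ha⟩, rfl⟩
      · rintro ⟨⟨a, ha⟩, rfl⟩; exact ⟨a, ha, rfl⟩
    have hrange : Lc 2 = LinearMap.range (φ u) := by
      rw [← hsp, hset, ← LinearMap.coe_range, Submodule.span_eq]
    have hrn := LinearMap.finrank_range_add_finrank_ker (φ u)
    rw [hdim1, ← hrange, hdiam] at hrn
    have hker : LinearMap.ker (φ u) = ⊥ := Submodule.finrank_eq_zero.1 (by omega)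
    have humem : (⟨u, hu⟩ : ↥(Lc 1)) ∈ LinearMap.ker (φ u) := by
      simp only [LinearMap.mem_ker]
      show ⁅u, u⁆ = 0
      exact lie_self u
    rw [hker, Submodule.mem_bot] at humem
    exact hune (by simpa using congrArg Subtype.val humem)
  have hk4 : 4 ≤ k := by
    rcases Nat.lt_or_ge k 4 with h | h
    · interval_cases k <;> omega
    · exact h
  have hm2 : 2 ≤ m := by omega
  -- spanning vectors of the one-dimensional components
  have hvex : ∀ i : ℕ, ∃ w : L, 2 ≤ i → i < k →
      (w ∈ Lc i ∧ w ≠ 0 ∧ ∀ u ∈ Lc i, ∃ c : K, u = c • w) := by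
    intro i
    by_cases hi : 2 ≤ i ∧ i < k
    · have h1 : Module.finrank K (Lc i) = 1 := hone i hi.1 hi.2
      obtain ⟨v0, hv0ne, hv0sp⟩ := finrank_eq_one_iff'.1 h1
      refine ⟨(v0 : L), fun _ _ => ⟨v0.2, ?_, ?_⟩⟩
      · intro h
        exact hv0ne (Subtype.ext h)
      · intro u hu
        obtain ⟨c, hc⟩ := hv0sp ⟨u, hu⟩
        exact ⟨c, by simpa using (congrArg Subtype.val hc).symm⟩
    · exact ⟨0, fun h1 h2 => absurd ⟨h1, h2⟩ hi⟩
  choose v hv using hvex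
  have hvmem : ∀ i, 2 ≤ i → i < k → v i ∈ Lc i := fun i h1 h2 => (hv i h1 h2).1
  have hvne : ∀ i, 2 ≤ i → i < k → v i ≠ 0 := fun i h1 h2 => (hv i h1 h2).2.1
  have hvsp : ∀ i, 2 ≤ i → i < k → ∀ u ∈ Lc i, ∃ c : K, u = c • v i :=
    fun i h1 h2 => (hv i h1 h2).2.2
  -- choice of y killing L₂
  haveI fd3 : FiniteDimensional K (Lc 3) :=
    FiniteDimensional.of_finrank_pos (by rw [hone 3 (by omega) (by omega)]; omega)
  have hv2m : v 2 ∈ Lc 2 := hvmem 2 le_rfl (by omega)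
  have hv2ne : v 2 ≠ 0 := hvne 2 le_rfl (by omega)
  have hrle : LinearMap.range (φ (v 2)) ≤ Lc 3 := by
    rintro w ⟨a, rfl⟩
    exact hgrade 2 1 (v 2) hv2m (a : L) a.2
  have hker3 : LinearMap.ker (φ (v 2)) ≠ ⊥ := by
    intro hb
    have hrn := LinearMap.finrank_range_add_finrank_ker (φ (v 2))
    rw [hdim1, hb] at hrn
    rw [finrank_bot] at hrn
    have hle : Module.finrank K (LinearMap.range (φ (v 2))) ≤ Module.finrank K (Lc 3) :=
      Submodule.finrank_mono hrle
    rw [hone 3 (by omega) (by omega)] at hle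
    omega
  obtain ⟨y0, hy0ker, hy0ne⟩ := (Submodule.ne_bot_iff _).1 hker3
  set y : L := (y0 : L) with hydef
  have hy1 : y ∈ Lc 1 := y0.2
  have hyne : y ≠ 0 := fun h => hy0ne (Subtype.ext h)
  have hv2y : ⁅v 2, y⁆ = 0 := hy0ker
  have hyL2 : ∀ w ∈ Lc 2, ⁅w, y⁆ = 0 := by
    intro w hw
    obtain ⟨c, rfl⟩ := hvsp 2 le_rfl (by omega) w hw
    rw [smul_lie, hv2y, smul_zero]
  -- choice of x
  have hcov1 := hcov 1 le_rfl y hy1 hyne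
  have hxex : ∃ x, x ∈ Lc 1 ∧ ⁅y, x⁆ ≠ 0 := by
    by_contra h
    push_neg at h
    have hb : Submodule.span K {w | ∃ a ∈ Lc 1, w = ⁅y, a⁆} = ⊥ := by
      rw [Submodule.span_eq_bot]
      rintro w ⟨a, ha, rfl⟩
      exact h a ha
    rw [hcov1] at hb
    exact hv2ne (by rw [← Submodule.mem_bot (R := K), ← hb]; exact hv2m)
  obtain ⟨x, hx1, hyx⟩ := hxex
  have hxne : x ≠ 0 := fun h => hyx (by rw [h, lie_zero])
  -- L₁ is spanned by x and y
  have hind : LinearIndependent K ![x, y] := by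
    rw [LinearIndependent.pair_iff]
    intro s t hst
    have h1 : ⁅y, s • x + t • y⁆ = 0 := by rw [hst, lie_zero]
    rw [lie_add, lie_smul, lie_smul, lie_self, smul_zero, add_zero] at h1
    have hs : s = 0 := by
      rcases smul_eq_zero.1 h1 with h | h
      · exact h
      · exact absurd h hyx
    refine ⟨hs, ?_⟩
    rw [hs, zero_smul, zero_add] at hst
    rcases smul_eq_zero.1 hst with h | h
    · exact h
    · exact absurd h hyne
  have hL1 : Lc 1 = Submodule.span K {x, y} := by
    have hrge : Set.range ![x, y] = ({x, y} : Set L) := Matrix.range_cons_cons_empty x y _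
    have hsp2 : Module.finrank K (Submodule.span K ({x, y} : Set L)) = 2 := by
      rw [← hrge, finrank_span_eq_card hind]
      simp
    refine (Submodule.eq_of_le_of_finrank_le ?_ ?_).symm
    · rw [Submodule.span_le]
      rintro w hw
      rcases hw with rfl | hw
      · exact hx1
      · rw [Set.mem_singleton_iff] at hw
        subst hw
        exact hy1
    · rw [hdim1, hsp2]
  have hmem1 : ∀ a ∈ Lc 1, ∃ s t : K, s • x + t • y = a := by
    intro a ha
    rw [hL1] at ha
    exact Submodule.mem_span_pair.1 ha
  -- the sandwich property of y
  have hxyy : ⁅⁅x, y⁆, y⁆ = 0 := hyL2 ⁅x, y⁆ (hgrade 1 1 x hx1 y hy1)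
  have hQ1 : ∀ a ∈ Lc 1, ⁅⁅a, y⁆, y⁆ = 0 := by
    intro a ha
    obtain ⟨s, t, hst⟩ := hmem1 a ha
    rw [← hst]
    simp [add_lie, smul_lie, hxyy]
  have hQ : ∀ i, 1 ≤ i → i + 2 ≤ k → ∀ u ∈ Lc i, ⁅⁅u, y⁆, y⁆ = 0 := by
    intro i hi
    induction i, hi using Nat.le_induction with
    | base => exact fun _ u hu => hQ1 u hu
    | succ n hn ih =>
      intro hn2 u hu
      have hnk : n + 2 ≤ k := by omega
      obtain ⟨u₀, hu₀m, hu₀ne⟩ : ∃ w : L, w ∈ Lc n ∧ w ≠ 0 := by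
        rcases Nat.lt_or_ge n 2 with h | h
        · have : n = 1 := by omega
          subst this
          exact ⟨x, hx1, hxne⟩
        · exact ⟨v n, hvmem n h (by omega), hvne n h (by omega)⟩
      have hsp := hcov n hn u₀ hu₀m hu₀ne
      rw [← hsp] at hu
      induction hu using Submodule.span_induction with
      | mem w hw =>
        obtain ⟨a, ha, rfl⟩ := hw
        exact sand K y u₀ a (ih hnk u₀ hu₀m) (hQ1 a ha)
      | zero => simp
      | add a b ha hb pa pb => rw [add_lie, add_lie, pa, pb, add_zero]
      | smul c a ha pa => rw [smul_lie, smul_lie, pa, smul_zero]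
  -- structure constants
  have habex : ∀ i : ℕ, ∃ ab : K × K, 2 ≤ i → i + 1 < k →
      (⁅v i, x⁆ = ab.1 • v (i + 1) ∧ ⁅v i, y⁆ = ab.2 • v (i + 1)) := by
    intro i
    by_cases hi : 2 ≤ i ∧ i + 1 < k
    · have hm1 : ⁅v i, x⁆ ∈ Lc (i + 1) := hgrade i 1 (v i) (hvmem i hi.1 (by omega)) x hx1
      have hm2' : ⁅v i, y⁆ ∈ Lc (i + 1) := hgrade i 1 (v i) (hvmem i hi.1 (by omega)) y hy1
      obtain ⟨c1, hc1⟩ := hvsp (i + 1) (by omega) hi.2 _ hm1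
      obtain ⟨c2, hc2⟩ := hvsp (i + 1) (by omega) hi.2 _ hm2'
      exact ⟨(c1, c2), fun _ _ => ⟨hc1, hc2⟩⟩
    · exact ⟨(0, 0), fun h1 h2 => absurd ⟨h1, h2⟩ hi⟩
  choose ab hab using habex
  have notboth : ∀ i, 2 ≤ i → i + 1 < k → ((ab i).1 ≠ 0 ∨ (ab i).2 ≠ 0) := by
    intro i h2 hik
    by_contra h
    push_neg at h
    obtain ⟨h1, h2'⟩ := h
    have hsp := hcov i (by omega) (v i) (hvmem i h2 (by omega)) (hvne i h2 (by omega))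
    have hb : Submodule.span K {w | ∃ a ∈ Lc 1, w = ⁅v i, a⁆} = ⊥ := by
      rw [Submodule.span_eq_bot]
      rintro w ⟨a, ha, rfl⟩
      obtain ⟨s, t, hst⟩ := hmem1 a ha
      rw [← hst, lie_add, lie_smul, lie_smul, (hab i h2 hik).1, (hab i h2 hik).2, h1, h2']
      simp
    rw [hsp] at hb
    exact hvne (i + 1) (by omega) (by omega)
      (by rw [← Submodule.mem_bot (R := K), ← hb]; exact hvmem (i + 1) (by omega) (by omega))
  -- the diamond
  have hk1m : v (k - 1) ∈ Lc (k - 1) := hvmem (k - 1) (by omega) (by omega)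
  have hk1ne : v (k - 1) ≠ 0 := hvne (k - 1) (by omega) (by omega)
  set w₁ : L := ⁅v (k - 1), x⁆ with hw1def
  set w₂ : L := ⁅v (k - 1), y⁆ with hw2def
  have hkk : k - 1 + 1 = k := by omega
  have hw1k : w₁ ∈ Lc k := by rw [← hkk]; exact hgrade (k - 1) 1 _ hk1m x hx1
  have hw2k : w₂ ∈ Lc k := by rw [← hkk]; exact hgrade (k - 1) 1 _ hk1m y hy1
  have hspan2 : Lc k = Submodule.span K ({w₁, w₂} : Set L) := by
    have hc := hcov (k - 1) (by omega) (v (k - 1)) hk1m hk1ne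
    rw [hkk] at hc
    refine le_antisymm ?_ ?_
    · rw [← hc, Submodule.span_le]
      rintro w ⟨a, ha, rfl⟩
      obtain ⟨s, t, hst⟩ := hmem1 a ha
      rw [← hst, lie_add, lie_smul, lie_smul]
      exact Submodule.mem_span_pair.2 ⟨s, t, rfl⟩
    · rw [Submodule.span_le]
      rintro w hw
      rcases hw with rfl | hw
      · exact hw1k
      · rw [Set.mem_singleton_iff] at hw
        subst hw
        exact hw2k
  have hIfin : Module.finrank K (Submodule.span K ({w₁, w₂} : Set L)) = 2 := by
    rw [← hspan2]; exact hdiam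
  have hsing : ∀ z : L, Module.finrank K (Submodule.span K ({z} : Set L)) ≤ 1 := by
    intro z
    by_cases hz : z = 0
    · subst hz
      rw [Submodule.span_zero_singleton]
      rw [finrank_bot]
      omega
    · rw [finrank_span_singleton hz]
  have hI : ∀ s t : K, s • w₁ = t • w₂ → s = 0 ∧ t = 0 := by
    intro s t hst
    by_contra hcon
    rw [not_and_or] at hcon
    rcases hcon with hs | ht
    · have hw1mem : w₁ ∈ Submodule.span K ({w₂} : Set L) := by
        rw [Submodule.mem_span_singleton]
        refine ⟨s⁻¹ * t, ?_⟩
        rw [mul_smul, ← hst, smul_smul, inv_mul_cancel₀ hs, one_smul]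
      have heq : Submodule.span K ({w₁, w₂} : Set L) = Submodule.span K ({w₂} : Set L) :=
        Submodule.span_insert_eq_span hw1mem
      rw [heq] at hIfin
      have := hsing w₂
      omega
    · have hw2mem : w₂ ∈ Submodule.span K ({w₁} : Set L) := by
        rw [Submodule.mem_span_singleton]
        refine ⟨t⁻¹ * s, ?_⟩
        rw [mul_smul, hst, smul_smul, inv_mul_cancel₀ ht, one_smul]
      have heq : Submodule.span K ({w₁, w₂} : Set L) = Submodule.span K ({w₁} : Set L) := by
        rw [Set.pair_comm]
        exact Submodule.span_insert_eq_span hw2mem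
      rw [heq] at hIfin
      have := hsing w₁
      omega
  have hw2ne : w₂ ≠ 0 := by
    intro h
    have := (hI 0 1 (by rw [h, zero_smul, smul_zero])).2
    exact one_ne_zero this
  -- β_{k-2} = 0 via the sandwich property
  have hk21 : k - 2 + 1 = k - 1 := by omega
  have habk2 := hab (k - 2) (by omega) (by omega)
  have hβk2 : (ab (k - 2)).2 = 0 := by
    have hq := hQ (k - 2) (by omega) (by omega) (v (k - 2)) (hvmem (k - 2) (by omega) (by omega))
    rw [habk2.2, smul_lie, hk21] at hq
    rcases smul_eq_zero.1 hq with h | h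
    · exact h
    · exact absurd h hw2ne
  have hαk2 : (ab (k - 2)).1 ≠ 0 := by
    rcases notboth (k - 2) (by omega) (by omega) with h | h
    · exact h
    · exact absurd hβk2 h
  -- the sequence S
  set S : ℕ → L := fun a => ⁅v a, v (k - a)⁆ with hSdef
  -- S 2 ≠ 0
  have hS2ne : S 2 ≠ 0 := by
    intro h0
    have hxym : ⁅x, y⁆ ∈ Lc 2 := hgrade 1 1 x hx1 y hy1
    obtain ⟨c₀, hc₀⟩ := hvsp 2 le_rfl (by omega) _ hxym
    have hj := jacob2 x y (v (k - 2))
    rw [hc₀, smul_lie] at hj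
    have ht1 : ⁅x, v (k - 2)⁆ = -((ab (k - 2)).1 • v (k - 1)) := by
      rw [← lie_skew, habk2.1, hk21]
    have ht2 : ⁅y, v (k - 2)⁆ = 0 := by
      rw [← lie_skew, habk2.2, hβk2, zero_smul, neg_zero]
    rw [ht1, ht2, lie_zero, add_zero, neg_lie, smul_lie] at hj
    have hS2 : ⁅v 2, v (k - 2)⁆ = S 2 := rfl
    rw [hS2, h0, smul_zero] at hj
    have : (ab (k - 2)).1 • w₂ = 0 := by
      rw [← neg_eq_zero, ← hj]
    rcases smul_eq_zero.1 this with h | h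
    · exact hαk2 h
    · exact hw2ne h
  -- the propagation step
  have hstep : ∀ a, 2 ≤ a → a < m → S (a + 1) = 0 → S a = 0 := by
    intro a ha2 ham hS1
    set b := k - 1 - a with hbdef
    have hb2 : 2 ≤ b := by omega
    have hbk : b + 1 < k := by omega
    have hak : a + 1 < k := by omega
    have hba : a + b = k - 1 := by omega
    have hmem := hgrade a b (v a) (hvmem a ha2 (by omega)) (v b) (hvmem b hb2 (by omega))
    rw [hba] at hmem
    obtain ⟨c, hc⟩ := hvsp (k - 1) (by omega) (by omega) _ hmem
    have hE := jacob2 (v a) (v b) x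
    have hD := jacob2 (v a) (v b) y
    rw [hc, smul_lie, (hab a ha2 hak).1, (hab b hb2 hbk).1, smul_lie, lie_smul] at hE
    rw [hc, smul_lie, (hab a ha2 hak).2, (hab b hb2 hbk).2, smul_lie, lie_smul] at hD
    have hSa1 : ⁅v (a + 1), v b⁆ = S (a + 1) := by
      have : k - (a + 1) = b := by omega
      rw [hSdef]
      simp only [this]
    have hSa : ⁅v a, v (b + 1)⁆ = S a := by
      have : k - a = b + 1 := by omega
      rw [hSdef]
      simp only [this]
    rw [hSa1, hSa, hS1, smul_zero, zero_add] at hE hD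
    -- hE : c • w₁ = (ab b).1 • S a ;  hD : c • w₂ = (ab b).2 • S a
    have key : ((ab b).2 * c) • w₁ = ((ab b).1 * c) • w₂ := by
      rw [mul_smul, mul_smul, hE, hD, smul_smul, smul_smul, mul_comm]
    obtain ⟨h1, h2⟩ := hI _ _ key
    rcases notboth b hb2 hbk with hα | hβ
    · have hc0 : c = 0 := by
        rcases mul_eq_zero.1 h2 with h | h
        · exact absurd h hα
        · exact h
      rw [hc0, zero_smul] at hE
      rcases smul_eq_zero.1 hE.symm with h | h
      · exact absurd h hα
      · exact h
    · have hc0 : c = 0 := by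
        rcases mul_eq_zero.1 h1 with h | h
        · exact absurd h hβ
        · exact h
      rw [hc0, zero_smul] at hD
      rcases smul_eq_zero.1 hD.symm with h | h
      · exact absurd h hβ
      · exact h
  -- propagate from the middle down to 2
  have hchain : ∀ t, t + 2 ≤ m → S (m - t) = 0 := by
    intro t
    induction t with
    | zero =>
      intro _
      have hkm : k - m = m := by omega
      show S m = 0
      rw [hSdef]
      simp only [hkm]
      exact lie_self _
    | succ n ih =>
      intro hn
      have h1 : S (m - n) = 0 := ih (by omega)
      have ha : m - (n + 1) + 1 = m - n := by omega
      have := hstep (m - (n + 1)) (by omega) (by omega) (by rw [ha]; exact h1)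
      exact this
  have hfin := hchain (m - 2) (by omega)
  rw [show m - (m - 2) = 2 from by omega] at hfin
  exact hS2ne hfin
end

section
/- Let M be a finite-dimensional graded Lie algebra of maximal class with exactly two distinct two-step centralizers 𝔽y and 𝔽x, and suppose C_{dim M - 2} ≠ C₂. Then M is determined up to isomorphism of graded Lie algebras by its sequence of two-step centralizers (C_i); equivalently, two such algebras with the same centralizer sequence and same dimension are isomorphic as graded Lie algebras. -/
/-- `a` centralizes the homogeneous component `S`. -/
def centralizesIn {K L : Type*} [Field K] [LieRing L] [LieAlgebra K L]
    (a : L) (S : Submodule K L) : Prop :=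
  ∀ u ∈ S, ⁅u, a⁆ = 0

/-!
Put `e₁ = x`, `e₂ = ⁅x, y⁆` and `e_{i+1} = ⁅e_i, x⁆` or `⁅e_i, y⁆` according as `y` centralizes
`M_i` or not. Since every `C_i` contains `x` or `y`, `M_i` is spanned by `e_i` for `i ≥ 2`, so
`x, y, e₂, …, e_{n-1}` is a basis, and `⁅e_i, x⁆`, `⁅e_i, y⁆` are `e_{i+1}` or `0` as dictated by
the centralizer sequence alone. Hence the linear isomorphism matching the two bases respects
brackets with `x` and `y`; by the Jacobi identity, a linear map respecting brackets with a set of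
Lie generators respects all brackets.
-/

section MaxClass

open Submodule Set

section LieGenerators

variable {K L L' : Type*} [CommRing K] [LieRing L] [LieAlgebra K L] [LieRing L'] [LieAlgebra K L']

theorem LinearMap.map_lie_of_span_eq_top_left (f : L →ₗ[K] L') {S : Set L}
    (hS : span K S = ⊤) {v : L} (hv : ∀ u ∈ S, f ⁅u, v⁆ = ⁅f u, f v⁆) (u : L) :
    f ⁅u, v⁆ = ⁅f u, f v⁆ := by
  induction (hS ▸ mem_top : u ∈ span K S) using Submodule.span_induction with
  | mem u hu => exact hv u hu
  | zero => simp
  | add u w _ _ hu hw => simp [add_lie, hu, hw]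
  | smul t u _ hu => simp [smul_lie, hu]

theorem LinearMap.map_lie_of_lieSpan_eq_top (f : L →ₗ[K] L') {G : Set L}
    (hG : LieSubalgebra.lieSpan K L G = ⊤) (hf : ∀ u, ∀ g ∈ G, f ⁅u, g⁆ = ⁅f u, f g⁆)
    (u v : L) : f ⁅u, v⁆ = ⁅f u, f v⁆ := by
  let A : LieSubalgebra K L :=
    { carrier := {v | ∀ u, f ⁅u, v⁆ = ⁅f u, f v⁆}
      add_mem' := fun hv hw u => by simp [lie_add, hv u, hw u]
      zero_mem' := fun u => by simp
      smul_mem' := fun t v hv u => by simp [lie_smul, hv u]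
      lie_mem' := fun {v w} hv hw u => by
        have hvu : f ⁅v, ⁅u, w⁆⁆ = ⁅f v, ⁅f u, f w⁆⁆ := by
          rw [← lie_skew, map_neg, hv, hw, ← lie_skew, neg_neg]
        rw [leibniz_lie, map_add, hw, hv, hvu, hw v]
        exact (leibniz_lie _ _ _).symm }
  have hA : LieSubalgebra.lieSpan K L G ≤ A := LieSubalgebra.lieSpan_le.2 fun g hg u => hf u g hg
  exact hA (hG ▸ LieSubalgebra.mem_top v) u

end LieGenerators

open Classical

variable {K L L' : Type*} [Field K] [LieRing L] [LieAlgebra K L] [LieRing L'] [LieAlgebra K L']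

noncomputable def centralizerChain (M : ℕ → Submodule K L) (x y : L) : ℕ → L
  | 0 => 0
  | 1 => x
  | 2 => ⁅x, y⁆
  | (i + 3) => if centralizesIn y (M (i + 2)) then ⁅centralizerChain M x y (i + 2), x⁆
      else ⁅centralizerChain M x y (i + 2), y⁆

theorem centralizerChain_succ (M : ℕ → Submodule K L) (x y : L) {i : ℕ} (hi : 2 ≤ i) :
    centralizerChain M x y (i + 1) = if centralizesIn y (M i)
      then ⁅centralizerChain M x y i, x⁆ else ⁅centralizerChain M x y i, y⁆ := by
  obtain ⟨k, rfl⟩ := Nat.exists_eq_add_of_le' hi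
  simp only [centralizerChain]

noncomputable def chainFamily (M : ℕ → Submodule K L) (x y : L) (n : ℕ) :
    Fin 2 ⊕ Fin (n - 2) → L :=
  Sum.elim ![x, y] fun k => centralizerChain M x y (k + 2)

structure IsMaxClassGrading (M : ℕ → Submodule K L) (x y : L) (n : ℕ) : Prop where
  zero_eq_bot : M 0 = ⊥
  iSup_eq_top : iSup M = ⊤
  iSupIndep : iSupIndep M
  finrank_one : Module.finrank K (M 1) = 2
  x_mem : x ∈ M 1
  y_mem : y ∈ M 1
  linearIndependent_pair : LinearIndependent K ![x, y]
  lie_mem : ∀ i j, ∀ u ∈ M i, ∀ w ∈ M j, ⁅u, w⁆ ∈ M (i + j)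
  span_lie_one : ∀ i ≥ 1, span K {w | ∃ u ∈ M i, ∃ a ∈ M 1, w = ⁅u, a⁆} = M (i + 1)
  pred_ne_bot : M (n - 1) ≠ ⊥
  eq_bot : M n = ⊥
  centralizesIn_y_or_x : ∀ i, 2 ≤ i → i < n - 1 → centralizesIn y (M i) ∨ centralizesIn x (M i)

namespace IsMaxClassGrading

variable {M : ℕ → Submodule K L} {x y : L} {n : ℕ}

theorem one_le (h : IsMaxClassGrading M x y n) : 1 ≤ n := by
  by_contra hn
  exact h.pred_ne_bot (by rw [show n - 1 = 0 by omega, h.zero_eq_bot])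

theorem eq_bot_of_eq_bot_of_le (h : IsMaxClassGrading M x y n) {i j : ℕ} (hi : 1 ≤ i)
    (hM : M i = ⊥) (hij : i ≤ j) : M j = ⊥ := by
  induction j, hij using Nat.le_induction with
  | base => exact hM
  | succ k hk ih =>
    rw [← h.span_lie_one k (hi.trans hk), span_eq_bot]
    rintro w ⟨u, hu, a, -, rfl⟩
    rw [ih, mem_bot] at hu
    rw [hu, zero_lie]

theorem eq_bot_of_le (h : IsMaxClassGrading M x y n) {i : ℕ} (hi : n ≤ i) : M i = ⊥ :=
  h.eq_bot_of_eq_bot_of_le h.one_le h.eq_bot hi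

theorem ne_bot_of_lt (h : IsMaxClassGrading M x y n) {i : ℕ} (hi : 1 ≤ i) (hin : i < n) :
    M i ≠ ⊥ := fun hM => h.pred_ne_bot (h.eq_bot_of_eq_bot_of_le hi hM (by omega))

theorem centralizesIn_of_le (h : IsMaxClassGrading M x y n) {i : ℕ} (hi : n - 1 ≤ i) {a : L}
    (ha : a ∈ M 1) : centralizesIn a (M i) := fun u hu => by
  simpa [h.eq_bot_of_le (show n ≤ i + 1 by have := h.one_le; omega)] using h.lie_mem i 1 u hu a ha

theorem one_eq_span (h : IsMaxClassGrading M x y n) : M 1 = span K {x, y} := by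
  have hle : span K {x, y} ≤ M 1 := span_le.2 (pair_subset h.x_mem h.y_mem)
  have : FiniteDimensional K (M 1) := Module.finite_of_finrank_eq_succ h.finrank_one
  refine (eq_of_le_of_finrank_le hle ?_).symm
  rw [h.finrank_one, ← Matrix.range_cons_cons_empty, finrank_span_eq_card h.linearIndependent_pair]
  simp

theorem chain_mem (h : IsMaxClassGrading M x y n) {i : ℕ} (hi : 1 ≤ i) :
    centralizerChain M x y i ∈ M i := by
  induction i, hi using Nat.le_induction with
  | base => exact h.x_mem
  | succ k hk ih =>
    rcases (show k = 1 ∨ 2 ≤ k by omega) with rfl | hk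
    · exact h.lie_mem 1 1 x h.x_mem y h.y_mem
    · rw [centralizerChain_succ M x y hk]
      split_ifs
      exacts [h.lie_mem k 1 _ ih x h.x_mem, h.lie_mem k 1 _ ih y h.y_mem]

theorem chain_lie_x (h : IsMaxClassGrading M x y n) {i : ℕ} (hi : 2 ≤ i) :
    ⁅centralizerChain M x y i, x⁆ =
      if centralizesIn y (M i) then centralizerChain M x y (i + 1) else 0 := by
  rw [centralizerChain_succ M x y hi]
  split_ifs with hy
  · rfl
  · rcases lt_or_ge i (n - 1) with hin | hin
    · exact ((h.centralizesIn_y_or_x i hi hin).resolve_left hy) _ (h.chain_mem (by omega))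
    · exact h.centralizesIn_of_le hin h.x_mem _ (h.chain_mem (by omega))

theorem chain_lie_y (h : IsMaxClassGrading M x y n) {i : ℕ} (hi : 2 ≤ i) :
    ⁅centralizerChain M x y i, y⁆ =
      if centralizesIn y (M i) then 0 else centralizerChain M x y (i + 1) := by
  rw [centralizerChain_succ M x y hi]
  split_ifs with hy
  · exact hy _ (h.chain_mem (by omega))
  · rfl

theorem eq_span_chain (h : IsMaxClassGrading M x y n) {i : ℕ} (hi : 2 ≤ i) :
    M i = span K {centralizerChain M x y i} := by
  refine le_antisymm ?_ (span_singleton_le_iff_mem _ _ |>.2 (h.chain_mem (by omega)))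
  induction i, hi using Nat.le_induction with
  | base =>
    rw [← h.span_lie_one 1 le_rfl, span_le]
    rintro w ⟨u, hu, a, ha, rfl⟩
    obtain ⟨a₁, b₁, rfl⟩ := mem_span_pair.1 (h.one_eq_span ▸ hu)
    obtain ⟨a₂, b₂, rfl⟩ := mem_span_pair.1 (h.one_eq_span ▸ ha)
    refine mem_span_singleton.2 ⟨a₁ * b₂ - b₁ * a₂, ?_⟩
    simp only [centralizerChain, lie_add, add_lie, lie_smul, smul_lie, lie_self, ← lie_skew y x]
    module
  | succ k hk ih =>
    rw [← h.span_lie_one k (by omega), span_le]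
    rintro w ⟨u, hu, a, ha, rfl⟩
    obtain ⟨c, rfl⟩ := mem_span_singleton.1 (ih hu)
    obtain ⟨α, β, rfl⟩ := mem_span_pair.1 (h.one_eq_span ▸ ha)
    simp only [lie_add, lie_smul, smul_lie, h.chain_lie_x hk, h.chain_lie_y hk]
    refine mem_span_singleton.2 ?_
    split_ifs
    exacts [⟨α * c, by module⟩, ⟨β * c, by module⟩]

theorem chain_eq_zero (h : IsMaxClassGrading M x y n) {i : ℕ} (hi : n ≤ i) :
    centralizerChain M x y i = 0 := by
  simpa [h.eq_bot_of_le hi] using h.chain_mem (show 1 ≤ i by have := h.one_le; omega)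

theorem chain_ne_zero (h : IsMaxClassGrading M x y n) {i : ℕ} (hi : 2 ≤ i) (hin : i < n) :
    centralizerChain M x y i ≠ 0 := fun h0 =>
  h.ne_bot_of_lt (by omega) hin (by rw [h.eq_span_chain hi, h0, span_zero_singleton])

theorem chain_mem_span_chainFamily (h : IsMaxClassGrading M x y n) {i : ℕ} (hi : 2 ≤ i) :
    centralizerChain M x y i ∈ span K (range (chainFamily M x y n)) := by
  rcases lt_or_ge i n with hin | hin
  · exact subset_span ⟨.inr ⟨i - 2, by omega⟩, by simp [chainFamily, Nat.sub_add_cancel hi]⟩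
  · simp [h.chain_eq_zero hin]

theorem span_chainFamily (h : IsMaxClassGrading M x y n) :
    span K (range (chainFamily M x y n)) = ⊤ := by
  refine eq_top_iff.2 (h.iSup_eq_top ▸ iSup_le fun i => ?_)
  rcases (show i = 0 ∨ i = 1 ∨ 2 ≤ i by omega) with rfl | rfl | hi
  · simp [h.zero_eq_bot]
  · rw [h.one_eq_span, span_le]
    exact pair_subset (subset_span ⟨.inl 0, rfl⟩) (subset_span ⟨.inl 1, rfl⟩)
  · rw [h.eq_span_chain hi, span_singleton_le_iff_mem]
    exact h.chain_mem_span_chainFamily hi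

theorem linearIndependent_chainFamily (h : IsMaxClassGrading M x y n) :
    LinearIndependent K (chainFamily M x y n) := by
  have hchain : LinearIndependent K fun k : Fin (n - 2) => centralizerChain M x y (k + 2) :=
    (h.iSupIndep.comp fun k l hkl => Fin.ext (by simpa using hkl)).linearIndependent _
      (fun k => h.chain_mem (by omega)) (fun k => h.chain_ne_zero (by omega) (by omega))
  rw [chainFamily, linearIndependent_sum]
  refine ⟨by simpa using h.linearIndependent_pair, by simpa using hchain, ?_⟩
  simp only [Sum.elim_comp_inl, Sum.elim_comp_inr, Matrix.range_cons_cons_empty, ← h.one_eq_span]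
  refine (h.iSupIndep 1).mono_right (span_le.2 ?_)
  rintro _ ⟨k, rfl⟩
  exact mem_iSup_of_mem (k + 2 : ℕ) (mem_iSup_of_mem (by omega) (h.chain_mem (by omega)))

theorem lieSpan_pair_eq_top (h : IsMaxClassGrading M x y n) :
    LieSubalgebra.lieSpan K L {x, y} = ⊤ := by
  have hx : x ∈ LieSubalgebra.lieSpan K L {x, y} := LieSubalgebra.subset_lieSpan (mem_insert x _)
  have hy : y ∈ LieSubalgebra.lieSpan K L {x, y} :=
    LieSubalgebra.subset_lieSpan (mem_insert_of_mem x (mem_singleton y))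
  have hchain : ∀ i ≥ 1, centralizerChain M x y i ∈ LieSubalgebra.lieSpan K L {x, y} := by
    intro i hi
    induction i, hi using Nat.le_induction with
    | base => exact hx
    | succ k hk ih =>
      rcases (show k = 1 ∨ 2 ≤ k by omega) with rfl | hk
      · exact LieSubalgebra.lie_mem _ hx hy
      · rw [centralizerChain_succ M x y hk]
        split_ifs
        exacts [LieSubalgebra.lie_mem _ ih hx, LieSubalgebra.lie_mem _ ih hy]
  rw [eq_top_iff, ← LieSubalgebra.toSubmodule_le_toSubmodule, LieSubalgebra.top_toSubmodule,
    ← h.span_chainFamily, span_le]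
  rintro _ ⟨(s | k), rfl⟩
  · fin_cases s
    exacts [hx, hy]
  · exact hchain _ (by omega)

variable {M' : ℕ → Submodule K L'} {x' y' : L'}

theorem map_chain_lie (h : IsMaxClassGrading M x y n) (h' : IsMaxClassGrading M' x' y' n)
    (hC : ∀ i, 2 ≤ i → (centralizesIn y (M i) ↔ centralizesIn y' (M' i)))
    {f : L →ₗ[K] L'} (hfx : f x = x') (hfy : f y = y')
    (hf : ∀ i, 2 ≤ i → f (centralizerChain M x y i) = centralizerChain M' x' y' i)
    {i : ℕ} (hi : 2 ≤ i) {g : L} (hg : g ∈ ({x, y} : Set L)) :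
    f ⁅centralizerChain M x y i, g⁆ = ⁅f (centralizerChain M x y i), f g⁆ := by
  rw [hf i hi]
  obtain rfl | rfl := hg
  · rw [h.chain_lie_x hi, hfx, h'.chain_lie_x hi, ← propext (hC i hi)]
    split_ifs
    exacts [hf _ (by omega), map_zero f]
  · rw [h.chain_lie_y hi, hfy, h'.chain_lie_y hi, ← propext (hC i hi)]
    split_ifs
    exacts [map_zero f, hf _ (by omega)]

theorem map_eq_of_map_chain (h : IsMaxClassGrading M x y n) (h' : IsMaxClassGrading M' x' y' n)
    {f : L →ₗ[K] L'} (hfx : f x = x') (hfy : f y = y')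
    (hf : ∀ i, 2 ≤ i → f (centralizerChain M x y i) = centralizerChain M' x' y' i) (i : ℕ) :
    (M i).map f = M' i := by
  rcases (show i = 0 ∨ i = 1 ∨ 2 ≤ i by omega) with rfl | rfl | hi
  · rw [h.zero_eq_bot, h'.zero_eq_bot, Submodule.map_bot]
  · rw [h.one_eq_span, h'.one_eq_span, map_span, image_pair, hfx, hfy]
  · rw [h.eq_span_chain hi, h'.eq_span_chain hi, map_span, image_singleton, hf i hi]

theorem exists_lieEquiv (h : IsMaxClassGrading M x y n) (h' : IsMaxClassGrading M' x' y' n)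
    (hC : ∀ i, 2 ≤ i → (centralizesIn y (M i) ↔ centralizesIn y' (M' i))) :
    ∃ e : L ≃ₗ⁅K⁆ L',
      (∀ i, (M i).map e.toLieHom.toLinearMap = M' i) ∧ e x = x' ∧ e y = y' := by
  let f : L ≃ₗ[K] L' :=
    (Module.Basis.mk h.linearIndependent_chainFamily h.span_chainFamily.ge).equiv
      (Module.Basis.mk h'.linearIndependent_chainFamily h'.span_chainFamily.ge) (Equiv.refl _)
  have hf : ∀ s, f (chainFamily M x y n s) = chainFamily M' x' y' n s := fun s => by
    rw [← Module.Basis.mk_apply h.linearIndependent_chainFamily h.span_chainFamily.ge s,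
      Module.Basis.equiv_apply, Module.Basis.mk_apply, Equiv.refl_apply]
  have hfx : f x = x' := hf (.inl 0)
  have hfy : f y = y' := hf (.inl 1)
  have hfe : ∀ i, 2 ≤ i → f (centralizerChain M x y i) = centralizerChain M' x' y' i := by
    intro i hi
    rcases lt_or_ge i n with hin | hin
    · simpa [chainFamily, Nat.sub_add_cancel hi] using hf (.inr ⟨i - 2, by omega⟩)
    · rw [h.chain_eq_zero hin, h'.chain_eq_zero hin, map_zero]
  have hgen : ∀ u ∈ range (chainFamily M x y n), ∀ g ∈ ({x, y} : Set L),
      f ⁅u, g⁆ = ⁅f u, f g⁆ := by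
    have hxy : f ⁅x, y⁆ = ⁅f x, f y⁆ := by rw [hfx, hfy]; exact hfe 2 le_rfl
    have hyx : f ⁅y, x⁆ = ⁅f y, f x⁆ := by rw [← lie_skew, map_neg, hxy, lie_skew]
    rintro _ ⟨s | k, rfl⟩ g hg
    · obtain hg | hg : g = x ∨ g = y := hg <;> subst g <;> fin_cases s <;>
        simp only [chainFamily, Sum.elim_inl, Fin.zero_eta, Fin.mk_one, Matrix.cons_val_zero,
          Matrix.cons_val_one, lie_self, map_zero]
      exacts [hyx, hxy]
    · exact h.map_chain_lie h' hC (f := f) hfx hfy hfe (by omega) hg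
  have hlie : ∀ u v, f ⁅u, v⁆ = ⁅f u, f v⁆ :=
    (f : L →ₗ[K] L').map_lie_of_lieSpan_eq_top h.lieSpan_pair_eq_top fun u g hg =>
      (f : L →ₗ[K] L').map_lie_of_span_eq_top_left h.span_chainFamily (fun u hu => hgen u hu g hg) u
  exact ⟨{ f with map_lie' := hlie _ _ }, h.map_eq_of_map_chain h' (f := f) hfx hfy hfe, hfx, hfy⟩

end IsMaxClassGrading

end MaxClass

theorem maximal_class_determined_by_centralizers_general {K L L' : Type*} [Field K]
    [LieRing L] [LieAlgebra K L] [LieRing L'] [LieAlgebra K L']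
    (M : ℕ → Submodule K L) (M' : ℕ → Submodule K L')
    (x y : L) (x' y' : L') (n : ℕ)
    -- maximal class structure on M:
    (h0 : M 0 = ⊥) (hsup : iSup M = ⊤) (hindep : iSupIndep M)
    (hdim1 : Module.finrank K (M 1) = 2)
    (hx : x ∈ M 1) (hy : y ∈ M 1) (hxy : LinearIndependent K ![x, y])
    (hgrade : ∀ i j, ∀ u ∈ M i, ∀ w ∈ M j, ⁅u, w⁆ ∈ M (i + j))
    (hstep : ∀ i ≥ 1, Submodule.span K {w | ∃ u ∈ M i, ∃ a ∈ M 1, w = ⁅u, a⁆} = M (i + 1))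
    -- maximal class structure on M':
    (h0' : M' 0 = ⊥) (hsup' : iSup M' = ⊤) (hindep' : iSupIndep M')
    (hdim1' : Module.finrank K (M' 1) = 2)
    (hx' : x' ∈ M' 1) (hy' : y' ∈ M' 1) (hxy' : LinearIndependent K ![x', y'])
    (hgrade' : ∀ i j, ∀ u ∈ M' i, ∀ w ∈ M' j, ⁅u, w⁆ ∈ M' (i + j))
    (hstep' : ∀ i ≥ 1,
      Submodule.span K {w | ∃ u ∈ M' i, ∃ a ∈ M' 1, w = ⁅u, a⁆} = M' (i + 1))
    -- both have dimension n:
    (htop : M (n - 1) ≠ ⊥ ∧ M n = ⊥) (htop' : M' (n - 1) ≠ ⊥ ∧ M' n = ⊥)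
    -- exactly two distinct two-step centralizers 𝔽y and 𝔽x, with y spanning C₂:
    (htwo : ∀ i, 2 ≤ i → i < n - 1 →
      (centralizesIn y (M i) ∧ ¬ centralizesIn x (M i)) ∨
      (centralizesIn x (M i) ∧ ¬ centralizesIn y (M i)))
    (htwo' : ∀ i, 2 ≤ i → i < n - 1 →
      (centralizesIn y' (M' i) ∧ ¬ centralizesIn x' (M' i)) ∨
      (centralizesIn x' (M' i) ∧ ¬ centralizesIn y' (M' i)))
    -- the two algebras have the same sequence of two-step centralizers:
    (hsame : ∀ i, 2 ≤ i → i < n - 1 →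
      (centralizesIn y (M i) ↔ centralizesIn y' (M' i))) :
    ∃ e : L ≃ₗ⁅K⁆ L',
      (∀ i, (M i).map e.toLieHom.toLinearMap = M' i) ∧ e x = x' ∧ e y = y' := by
  have hL : IsMaxClassGrading M x y n := ⟨h0, hsup, hindep, hdim1, hx, hy, hxy, hgrade, hstep,
    htop.1, htop.2, fun i hi hin => (htwo i hi hin).imp And.left And.left⟩
  have hL' : IsMaxClassGrading M' x' y' n := ⟨h0', hsup', hindep', hdim1', hx', hy', hxy',
    hgrade', hstep', htop'.1, htop'.2, fun i hi hin => (htwo' i hi hin).imp And.left And.left⟩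
  refine hL.exists_lieEquiv hL' fun i hi => ?_
  rcases lt_or_ge i (n - 1) with hin | hin
  · exact hsame i hi hin
  · exact iff_of_true (hL.centralizesIn_of_le hin hy) (hL'.centralizesIn_of_le hin hy')

/-- A finite-dimensional graded Lie algebra of maximal class with exactly two distinct
two-step centralizers `𝔽y`, `𝔽x`, and with `C_{dim M - 2} ≠ C₂`, is determined up to
graded isomorphism by its sequence of two-step centralizers: two such algebras of the
same dimension `n` with the same centralizer sequence are isomorphic via a graded
Lie algebra isomorphism mapping corresponding generators to each other. -/
theorem maximal_class_determined_by_centralizers {K L L' : Type*} [Field K]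
    [LieRing L] [LieAlgebra K L] [LieRing L'] [LieAlgebra K L']
    (M : ℕ → Submodule K L) (M' : ℕ → Submodule K L')
    (x y : L) (x' y' : L') (n : ℕ) (hn : 3 ≤ n)
    -- maximal class structure on M:
    (h0 : M 0 = ⊥) (hsup : iSup M = ⊤) (hindep : iSupIndep M)
    (hdim1 : Module.finrank K (M 1) = 2)
    (hdim : ∀ i ≥ 2, Module.finrank K (M i) ≤ 1)
    (hx : x ∈ M 1) (hy : y ∈ M 1) (hxy : LinearIndependent K ![x, y])
    (hgrade : ∀ i j, ∀ u ∈ M i, ∀ w ∈ M j, ⁅u, w⁆ ∈ M (i + j))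
    (hstep : ∀ i ≥ 1, Submodule.span K {w | ∃ u ∈ M i, ∃ a ∈ M 1, w = ⁅u, a⁆} = M (i + 1))
    -- maximal class structure on M':
    (h0' : M' 0 = ⊥) (hsup' : iSup M' = ⊤) (hindep' : iSupIndep M')
    (hdim1' : Module.finrank K (M' 1) = 2)
    (hdim' : ∀ i ≥ 2, Module.finrank K (M' i) ≤ 1)
    (hx' : x' ∈ M' 1) (hy' : y' ∈ M' 1) (hxy' : LinearIndependent K ![x', y'])
    (hgrade' : ∀ i j, ∀ u ∈ M' i, ∀ w ∈ M' j, ⁅u, w⁆ ∈ M' (i + j))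
    (hstep' : ∀ i ≥ 1,
      Submodule.span K {w | ∃ u ∈ M' i, ∃ a ∈ M' 1, w = ⁅u, a⁆} = M' (i + 1))
    -- both have dimension n:
    (htop : M (n - 1) ≠ ⊥ ∧ M n = ⊥) (htop' : M' (n - 1) ≠ ⊥ ∧ M' n = ⊥)
    -- exactly two distinct two-step centralizers 𝔽y and 𝔽x, with y spanning C₂:
    (htwo : ∀ i, 2 ≤ i → i < n - 1 →
      (centralizesIn y (M i) ∧ ¬ centralizesIn x (M i)) ∨
      (centralizesIn x (M i) ∧ ¬ centralizesIn y (M i)))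
    (htwo' : ∀ i, 2 ≤ i → i < n - 1 →
      (centralizesIn y' (M' i) ∧ ¬ centralizesIn x' (M' i)) ∨
      (centralizesIn x' (M' i) ∧ ¬ centralizesIn y' (M' i)))
    (hC2 : centralizesIn y (M 2)) (hC2' : centralizesIn y' (M' 2))
    (hocc : ∃ i, 2 ≤ i ∧ i < n - 1 ∧ centralizesIn x (M i) ∧ ¬ centralizesIn y (M i))
    (hocc' : ∃ i, 2 ≤ i ∧ i < n - 1 ∧ centralizesIn x' (M' i) ∧ ¬ centralizesIn y' (M' i))
    -- the hypothesis C_{dim M - 2} ≠ C₂: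
    (hlast : ¬ centralizesIn y (M (n - 2))) (hlast' : ¬ centralizesIn y' (M' (n - 2)))
    -- the two algebras have the same sequence of two-step centralizers:
    (hsame : ∀ i, 2 ≤ i → i < n - 1 →
      (centralizesIn y (M i) ↔ centralizesIn y' (M' i))) :
    ∃ e : L ≃ₗ⁅K⁆ L',
      (∀ i, (M i).map e.toLieHom.toLinearMap = M' i) ∧ e x = x' ∧ e y = y' :=
  maximal_class_determined_by_centralizers_general M M' x y x' y' n h0 hsup hindep hdim1 hx hy hxy
    hgrade hstep h0' hsup' hindep' hdim1' hx' hy' hxy' hgrade' hstep' htop htop' htwo htwo' hsame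
end
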